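/- arXiv:2504.20637 — 2 statements merged into one kernel-verified Lean document; each statement's English description precedes it below -/
import Mathlib

section
/- Given a lingo (D1, D2, A, f, g) with |D1| ≥ 2, the sharp construction Λ# = (D1, D2 × D2, A ⊗ A, f#, g#) is an f-checkable lingo, where A ⊗ A = {(a, a') ∈ A × A : a ≠ a'}, f#(d1, (a, a')) = (f(d1, a), f(d1, a')), and g#((d2, d2'), (a, a')) = g(d2, a). In particular: (1) g#(f#(d1, p), p) = d1 for all d1 and p ∈ A ⊗ A; (2) for every (a, a') ∈ A ⊗ A there exists a pair in D2 × D2 not in the image of f#(-, (a, a')). -/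
open Function

theorem Function.Injective.prodMk_notMem_range_pair {α β γ : Type*} {u : α → β} {v : α → γ}
    (hu : Injective u) (hv : Injective v) {x y : α} (hxy : x ≠ y) :
    (u x, v y) ∉ Set.range fun d => (u d, v d) := by
  rintro ⟨d, hd⟩
  obtain ⟨hdx, hdy⟩ := Prod.mk.inj hd
  exact hxy ((hu hdx).symm.trans (hv hdy))

theorem sharp_lingo_fCheckable_general {D1 D2 A : Type*}
    (f : D1 → A → D2) (g : D2 → A → D1)
    (hg : ∀ (d1 : D1) (a : A), g (f d1 a) a = d1)
    (hD1 : ∃ x y : D1, x ≠ y)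
    (fsharp : D1 → A × A → D2 × D2) (gsharp : D2 × D2 → A × A → D1)
    (hfs : ∀ d1 a a', fsharp d1 (a, a') = (f d1 a, f d1 a'))
    (hgs : ∀ d2 d2' a a', gsharp (d2, d2') (a, a') = g d2 a) :
    (∀ (d1 : D1) (p : A × A), p.1 ≠ p.2 → gsharp (fsharp d1 p) p = d1) ∧
    (∀ p : A × A, p.1 ≠ p.2 → ∃ q : D2 × D2, ∀ d1 : D1, fsharp d1 p ≠ q) := by
  have hf_injective (a : A) : Injective (f · a) :=
    LeftInverse.injective (g := (g · a)) (hg · a)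
  refine ⟨fun d1 ⟨a, a'⟩ _ => by rw [hfs, hgs, hg], fun ⟨a, a'⟩ _ => ?_⟩
  obtain ⟨x, y, hxy⟩ := hD1
  refine ⟨(f x a, f y a'), fun d1 hd1 => ?_⟩
  refine (hf_injective a).prodMk_notMem_range_pair (hf_injective a') hxy ⟨d1, ?_⟩
  simpa only [hfs] using hd1

/-- The sharp construction `Λ#` of a lingo with `|D1| ≥ 2` is an f-checkable lingo:
(1) the lingo equation holds, and (2) for each parameter pair `(a, a')` with `a ≠ a'`
there is an output pair not in the image of `f#`. -/
theorem sharp_lingo_fCheckable {D1 D2 A : Type*}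
    (f : D1 → A → D2) (g : D2 → A → D1)
    (hg : ∀ (d1 : D1) (a : A), g (f d1 a) a = d1)
    (hD1 : ∃ x y : D1, x ≠ y)
    (hA : ∃ a a' : A, a ≠ a')
    (fsharp : D1 → A × A → D2 × D2) (gsharp : D2 × D2 → A × A → D1)
    (hfs : ∀ d1 a a', fsharp d1 (a, a') = (f d1 a, f d1 a'))
    (hgs : ∀ d2 d2' a a', gsharp (d2, d2') (a, a') = g d2 a) :
    (∀ (d1 : D1) (p : A × A), p.1 ≠ p.2 → gsharp (fsharp d1 p) p = d1) ∧
    (∀ p : A × A, p.1 ≠ p.2 → ∃ q : D2 × D2, ∀ d1 : D1, fsharp d1 p ≠ q) :=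
  sharp_lingo_fCheckable_general f g hg hD1 fsharp gsharp hfs hgs
end

section
/- Let (D1, D2, A, f, g) be a lingo such that D2 ⊆ D1 (i.e., f(d1, a) ∈ D1 for all d1, a), there is a subset A0 ⊆ A with at least two distinct elements such that a'' ∈ A0 implies f(d1, a'') ≠ d1 for all d1, and f(f(d1, a), a') = f(f(d1, a'), a) for all d1, a, a'. Then the lingo is malleable, with recipe t(x, y) = f(x, y) and r(a) = if a ∈ A0 then a else a0 (for fixed a0 ∈ A0). -/
theorem commuting_lingo_malleable_general {D1 A : Type*}
    (f : D1 → A → D1)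
    (A0 : Set A) [DecidablePred (· ∈ A0)]
    (a0 : A) (ha0 : a0 ∈ A0)
    (hmove : ∀ (d1 : D1) (a'' : A), a'' ∈ A0 → f d1 a'' ≠ d1)
    (hcomm : ∀ (d1 : D1) (a a' : A), f (f d1 a) a' = f (f d1 a') a)
    (t : D1 → A → D1) (r : A → A)
    (ht : ∀ x y, t x y = f x y)
    (hr : ∀ a, r a = if a ∈ A0 then a else a0) :
    ∀ (d1 : D1) (a a' : A),
      f d1 a ≠ t (f d1 a) (r a') ∧
      ∃ d1' : D1, t (f d1 a) (r a') = f d1' a := by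
  intro d1 a a'
  have hr_mem : r a' ∈ A0 := hr a' ▸ ite_mem.2 ⟨id, fun _ => ha0⟩
  refine ⟨fun h => hmove (f d1 a) (r a') hr_mem ?_, f d1 (r a'), by rw [ht, hcomm]⟩
  rw [← ht, ← h]

/-- A lingo with outputs in its own input type, a set `A0` of parameters that
always move every point, and a commuting `f`, is malleable with recipe `t = f`
and `r a = if a ∈ A0 then a else a0`. -/
theorem commuting_lingo_malleable {D1 A : Type*}
    (f : D1 → A → D1) (g : D1 → A → D1)
    (hg : ∀ (d1 : D1) (a : A), g (f d1 a) a = d1)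
    (A0 : Set A) [DecidablePred (· ∈ A0)]
    (a0 a1 : A) (ha0 : a0 ∈ A0) (ha1 : a1 ∈ A0) (hne01 : a0 ≠ a1)
    (hmove : ∀ (d1 : D1) (a'' : A), a'' ∈ A0 → f d1 a'' ≠ d1)
    (hcomm : ∀ (d1 : D1) (a a' : A), f (f d1 a) a' = f (f d1 a') a)
    (t : D1 → A → D1) (r : A → A)
    (ht : ∀ x y, t x y = f x y)
    (hr : ∀ a, r a = if a ∈ A0 then a else a0) :
    ∀ (d1 : D1) (a a' : A),
      f d1 a ≠ t (f d1 a) (r a') ∧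
      ∃ d1' : D1, t (f d1 a) (r a') = f d1' a :=
  commuting_lingo_malleable_general f A0 a0 ha0 hmove hcomm t r ht hr
end
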